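/- With the same setup but with Q₂ : [0,T] → L(X₂) strongly continuous and Ω⃗_{t,s} the unique strongly continuous uniformly bounded backward evolution family satisfying Ω⃗_{t,s} = U⃗_{t,s} − ∫_t^s U⃗_{t,r} Q₂(r) Ω⃗_{r,s} dr, for every G ∈ L(X₁,X₂) the function P(t) = Ω⃗_{t,T} G U⃖_{T,t} + ∫_t^T Ω⃗_{t,r} Q₁₂(r) U⃖_{r,t} dr is the unique strongly continuous solution of P(t) = U⃗_{t,T} G U⃖_{T,t} + ∫_t^T U⃗_{t,r}[Q₁₂(r) − Q₂(r)P(r)] U⃖_{r,t} dr. -/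

import Mathlib

/-!
Fix `t` and `x`, put `g = G (U⃖_{T,t} x)` and `w r = Q₁₂(r) U⃖_{r,t} x`. By the cocycle property
of `U⃖`, along the orbit `s ↦ U⃖_{s,t} x` both the representation formula and the integral
equation become equations in `X₂` with data `g` and `w` only. Inserting the equation defining
`Ω⃗` into `∫_t^T U⃗_{t,r} Q₂(r) (Ω⃗_{r,T} g + ∫_r^T Ω⃗_{r,ρ} w(ρ) dρ) dr` and exchanging the order
of integration over the triangle `t ≤ r ≤ ρ ≤ T` turns it into
`U⃗_{t,T} g - Ω⃗_{t,T} g + ∫_t^T (U⃗_{t,ρ} - Ω⃗_{t,ρ}) w(ρ) dρ`, which is exactly the integral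
equation for `P`. Strong continuity of `P` is dominated convergence, and two solutions differ by
a `y` with `‖y s‖ ≤ C ∫_s^T ‖y‖`, which iterates to `‖y s‖ ≤ M (C (T - s))ⁿ / n!`, so `y = 0`.
-/

open MeasureTheory intervalIntegral Set Filter Topology

section OperatorFamilies

variable {𝕜 α E F : Type*} [NontriviallyNormedField 𝕜] [TopologicalSpace α]
  [NormedAddCommGroup E] [NormedSpace 𝕜 E] [NormedAddCommGroup F] [NormedSpace 𝕜 F]

theorem ContinuousOn.clm_apply_of_norm_le {A : α → E →L[𝕜] F} {f : α → E} {s : Set α} {M : ℝ}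
    (hf : ContinuousOn f s) (hA : ∀ y, ContinuousOn (fun r => A r y) s)
    (hM : ∀ r ∈ s, ‖A r‖ ≤ M) : ContinuousOn (fun r => A r (f r)) s := by
  intro r₀ hr₀
  have hsmall : Tendsto (fun r => A r (f r - f r₀)) (𝓝[s] r₀) (𝓝 0) := by
    refine squeeze_zero_norm' ?_ (by simpa using ((hf r₀ hr₀).sub_const (f r₀)).norm.const_mul M)
    filter_upwards [self_mem_nhdsWithin] with r hr
    exact (A r).le_of_opNorm_le (hM r hr) _
  rw [ContinuousWithinAt]
  simpa using hsmall.add (hA (f r₀) r₀ hr₀)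

theorem IsCompact.exists_bound_of_continuousOn_apply [CompleteSpace E] {K : Set α}
    (hK : IsCompact K) {A : α → E →L[𝕜] F} (hA : ∀ y, ContinuousOn (fun r => A r y) K) :
    ∃ M, ∀ r ∈ K, ‖A r‖ ≤ M := by
  obtain ⟨M, hM⟩ := banach_steinhaus (g := fun r : K => A r) fun y =>
    (hK.exists_bound_of_continuousOn (hA y)).imp fun _ h r => h r r.2
  exact ⟨M, fun r hr => hM ⟨r, hr⟩⟩

theorem ContinuousOn.clm_apply_of_isCompact [CompleteSpace E] {A : α → E →L[𝕜] F} {f : α → E}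
    {s K : Set α} (hf : ContinuousOn f s) (hK : IsCompact K)
    (hA : ∀ y, ContinuousOn (fun r => A r y) K) (hs : s ⊆ K) :
    ContinuousOn (fun r => A r (f r)) s := by
  obtain ⟨M, hM⟩ := hK.exists_bound_of_continuousOn_apply hA
  exact hf.clm_apply_of_norm_le (fun y => (hA y).mono hs) fun r hr => hM r (hs hr)

theorem ContinuousOn.evolution_apply {Φ : ℝ → ℝ → E →L[𝕜] F} {a b M t : ℝ} {f : ℝ → E}
    {s : Set ℝ} (hf : ContinuousOn f s)
    (hΦsc : ∀ y, ∀ t ∈ Icc a b, ContinuousOn (fun s => Φ t s y) (Icc t b))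
    (hΦbdd : ∀ t s, a ≤ t → t ≤ s → s ≤ b → ‖Φ t s‖ ≤ M) (ht : t ∈ Icc a b) (hs : s ⊆ Icc t b) :
    ContinuousOn (fun r => Φ t r (f r)) s :=
  hf.clm_apply_of_norm_le (fun y => (hΦsc y t ht).mono hs)
    fun r hr => hΦbdd t r ht.1 (hs hr).1 (hs hr).2

end OperatorFamilies

theorem exists_clm_apply_eq_intervalIntegral {E F : Type*} [NormedAddCommGroup E]
    [NormedSpace ℝ E] [NormedAddCommGroup F] [NormedSpace ℝ F] {A : ℝ → E →L[ℝ] F} {a b C : ℝ}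
    (hA : ∀ x, IntervalIntegrable (fun r => A r x) volume a b) (hC : ∀ r ∈ uIoc a b, ‖A r‖ ≤ C) :
    ∃ J : E →L[ℝ] F, ∀ x, J x = ∫ r in a..b, A r x := by
  let J : E →ₗ[ℝ] F :=
    { toFun := fun x => ∫ r in a..b, A r x
      map_add' := fun x y => by simp only [map_add, integral_add (hA x) (hA y)]
      map_smul' := fun c x => by
        simp only [map_smul, intervalIntegral.integral_smul, RingHom.id_apply] }
  refine ⟨J.mkContinuous (C * |b - a|) fun x => ?_, fun x => rfl⟩
  calc ‖∫ r in a..b, A r x‖ ≤ C * ‖x‖ * |b - a| :=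
        norm_integral_le_of_norm_le_const fun r hr => (A r).le_of_opNorm_le (hC r hr) x
    _ = C * |b - a| * ‖x‖ := by ring

theorem nonpos_of_le_mul_integral {u : ℝ → ℝ} {a b C : ℝ} (hu : ContinuousOn u (Icc a b))
    (hC : 0 ≤ C) (h : ∀ s ∈ Icc a b, u s ≤ C * ∫ r in s..b, u r) : ∀ s ∈ Icc a b, u s ≤ 0 := by
  obtain ⟨M, hM⟩ := isCompact_Icc.exists_bound_of_continuousOn hu
  have iterate : ∀ n : ℕ, ∀ s ∈ Icc a b, u s ≤ M * (C * (b - s)) ^ n / n.factorial := by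
    intro n
    induction n with
    | zero => intro s hs; simpa using (le_abs_self _).trans (hM s hs)
    | succ n ih =>
      intro s hs
      calc u s ≤ C * ∫ r in s..b, u r := h s hs
        _ ≤ C * ∫ r in s..b, M * (C * (b - r)) ^ n / n.factorial := by
          refine mul_le_mul_of_nonneg_left (integral_mono_on hs.2 ?_ ?_ fun r hr => ih r ?_) hC
          · exact (hu.mono (Icc_subset_Icc_left hs.1)).intervalIntegrable_of_Icc hs.2
          · exact (by fun_prop : Continuous _).intervalIntegrable _ _
          · exact ⟨hs.1.trans hr.1, hr.2⟩
        _ = M * (C * (b - s)) ^ (n + 1) / (n + 1).factorial := by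
          rw [integral_comp_sub_left (fun x => M * (C * x) ^ n / n.factorial) b]
          simp only [sub_self, mul_pow, intervalIntegral.integral_div,
            intervalIntegral.integral_const_mul, integral_pow, Nat.factorial_succ]
          push_cast
          field_simp
          ring
  intro s hs
  have hlim : Tendsto (fun n : ℕ => M * (C * (b - s)) ^ n / n.factorial) atTop (𝓝 0) := by
    simpa [mul_div_assoc] using
      (FloorSemiring.tendsto_pow_div_factorial_atTop (C * (b - s))).const_mul M
  exact ge_of_tendsto' hlim fun n => iterate n s hs

theorem eqOn_zero_of_eq_integral {E : Type*} [NormedAddCommGroup E] [NormedSpace ℝ E]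
    {K : ℝ → ℝ → E →L[ℝ] E} {y : ℝ → E} {a b M : ℝ} (hy : ContinuousOn y (Icc a b))
    (hK : ∀ s ∈ Icc a b, ∀ r ∈ Icc s b, ‖K s r‖ ≤ M)
    (h : ∀ s ∈ Icc a b, y s = ∫ r in s..b, K s r (y r)) : EqOn y 0 (Icc a b) := by
  intro s hs
  have hM : 0 ≤ M := (norm_nonneg _).trans (hK s hs s ⟨le_rfl, hs.2⟩)
  refine norm_le_zero_iff.mp (nonpos_of_le_mul_integral hy.norm hM (fun s hs => ?_) s hs)
  rw [h s hs, ← intervalIntegral.integral_const_mul]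
  refine norm_integral_le_of_norm_le hs.2 (Eventually.of_forall fun r hr => ?_) ?_
  · exact (K s r).le_of_opNorm_le (hK s hs r ⟨hr.1.le, hr.2⟩) _
  · exact ((hy.mono (Icc_subset_Icc_left hs.1)).norm.const_smul M).intervalIntegrable_of_Icc hs.2

theorem exists_separatelyContinuous_extension_of_triangle {E : Type*} [NormedAddCommGroup E]
    {F : ℝ → ℝ → E} {a b C : ℝ} (hab : a ≤ b)
    (hleft : ∀ ρ ∈ Icc a b, ContinuousOn (F · ρ) (Icc a ρ))
    (hright : ∀ r ∈ Icc a b, ContinuousOn (F r) (Icc r b))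
    (hdiag : ContinuousOn (fun s => F s s) (Icc a b))
    (hC : ∀ r ∈ Icc a b, ∀ ρ ∈ Icc r b, ‖F r ρ‖ ≤ C) :
    ∃ H : ℝ → ℝ → E, (∀ ρ, Continuous (H · ρ)) ∧ (∀ r, Continuous (H r)) ∧
      (∀ r ρ, ‖H r ρ‖ ≤ C) ∧ ∀ r ∈ Icc a b, ∀ ρ ∈ Icc r b, H r ρ = F r ρ := by
  let c : ℝ → ℝ := fun x => max a (min x b)
  have hc : Continuous c := by fun_prop
  have hc_mem : ∀ x, c x ∈ Icc a b := fun x => ⟨le_max_left _ _, max_le hab (min_le_right _ _)⟩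
  have hc_mono : Monotone c := fun x y hxy => max_le_max le_rfl (min_le_min_right b hxy)
  have hc_eq : ∀ x ∈ Icc a b, c x = x := fun x hx => by simp [c, hx.1, hx.2]
  -- below the diagonal `H` takes the diagonal value, so that it stays continuous in `ρ`
  refine ⟨fun r ρ => F (c (min r ρ)) (c ρ), fun ρ => ?_, fun r => ?_, fun r ρ => ?_,
    fun r hr ρ hρ => ?_⟩
  · exact (hleft (c ρ) (hc_mem ρ)).comp_continuous (hc.comp (by fun_prop))
      fun r => ⟨(hc_mem _).1, hc_mono (min_le_right r ρ)⟩
  · show Continuous fun ρ => F (c (min r ρ)) (c ρ)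
    have hH : (fun ρ => F (c (min r ρ)) (c ρ)) =
        fun ρ => if r ≤ ρ then F (c r) (c ρ) else F (c ρ) (c ρ) := by
      ext ρ; rw [min_def]; split_ifs <;> rfl
    rw [hH]
    refine continuous_if_le continuous_const continuous_id ?_
      (hdiag.comp_continuous hc hc_mem).continuousOn fun ρ h => by rw [← h]
    exact (hright (c r) (hc_mem r)).comp hc.continuousOn
      fun ρ h => ⟨hc_mono h, (hc_mem ρ).2⟩
  · exact hC _ (hc_mem _) _ ⟨hc_mono (min_le_right r ρ), (hc_mem ρ).2⟩
  · simp only [min_eq_left hρ.1, hc_eq r hr, hc_eq ρ ⟨hr.1.trans hρ.1, hρ.2⟩]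

section IntervalIntegral

variable {E : Type*} [NormedAddCommGroup E] [NormedSpace ℝ E]

theorem intervalIntegral.integral_indicator_Ioi {f : ℝ → E} {a b t : ℝ} (ht : t ∈ Icc a b) :
    ∫ r in a..b, (Ioi t).indicator f r = ∫ r in t..b, f r := by
  rw [integral_of_le (ht.1.trans ht.2), integral_of_le ht.2,
    MeasureTheory.integral_indicator measurableSet_Ioi, Measure.restrict_restrict measurableSet_Ioi,
    inter_comm, Ioc_inter_Ioi, max_eq_right ht.1]

theorem continuousOn_intervalIntegral_of_triangle {F : ℝ → ℝ → E} {a b C : ℝ}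
    (hright : ∀ t ∈ Icc a b, ContinuousOn (F t) (Icc t b))
    (hleft : ∀ r ∈ Icc a b, ContinuousOn (fun t => F t r) (Icc a r))
    (hC : ∀ t ∈ Icc a b, ∀ r ∈ Icc t b, ‖F t r‖ ≤ C) :
    ContinuousOn (fun t => ∫ r in t..b, F t r) (Icc a b) := by
  intro t₀ ht₀
  have hab : a ≤ b := ht₀.1.trans ht₀.2
  have hC₀ : 0 ≤ C := (norm_nonneg _).trans (hC t₀ ht₀ t₀ ⟨le_rfl, ht₀.2⟩)
  have hrepr : ∀ t ∈ Icc a b, ∫ r in t..b, F t r = ∫ r in a..b, (Ioi t).indicator (F t) r :=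
    fun t ht => (integral_indicator_Ioi ht).symm
  refine ContinuousWithinAt.congr ?_ hrepr (hrepr t₀ ht₀)
  refine continuousWithinAt_of_dominated_interval (bound := fun _ => C) ?_ ?_
    intervalIntegrable_const ?_
  · filter_upwards [self_mem_nhdsWithin] with t ht
    rw [aestronglyMeasurable_indicator_iff measurableSet_Ioi, uIoc_of_le hab,
      Measure.restrict_restrict measurableSet_Ioi]
    exact ((hright t ht).mono fun r hr => ⟨hr.1.le, hr.2.2⟩).aestronglyMeasurable
      (measurableSet_Ioi.inter measurableSet_Ioc)
  · filter_upwards [self_mem_nhdsWithin] with t ht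
    refine Eventually.of_forall fun r hr => ?_
    rw [uIoc_of_le hab] at hr
    by_cases htr : t < r
    · rw [indicator_of_mem (mem_Ioi.mpr htr)]
      exact hC t ht r ⟨htr.le, hr.2⟩
    · rw [indicator_of_notMem (mt mem_Ioi.mp htr), norm_zero]
      exact hC₀
  · filter_upwards [Measure.ae_ne volume t₀] with r hrt₀ hr
    rw [uIoc_of_le hab] at hr
    rcases hrt₀.lt_or_gt with hlt | hgt
    · refine (continuousWithinAt_const (b := (0 : E))).congr_of_eventuallyEq ?_
        (indicator_of_notMem (not_lt.mpr hlt.le) _)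
      filter_upwards [nhdsWithin_le_nhds (Ioi_mem_nhds hlt)] with t ht
      exact indicator_of_notMem (not_lt.mpr (le_of_lt ht)) _
    · have hnear : Icc a r ∈ 𝓝[Icc a b] t₀ :=
        mem_of_superset (inter_mem_nhdsWithin _ (Iio_mem_nhds hgt))
          fun t ht => ⟨ht.1.1, ht.2.le⟩
      refine ((hleft r ⟨hr.1.le, hr.2⟩ t₀ ⟨ht₀.1, hgt.le⟩).mono_of_mem_nhdsWithin
        hnear).congr_of_eventuallyEq ?_ (indicator_of_mem hgt _)
      filter_upwards [nhdsWithin_le_nhds (Iio_mem_nhds hgt)] with t ht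
      exact indicator_of_mem (mem_Ioi.mpr ht) _

theorem integral_integral_swap_triangle_of_separatelyContinuous [CompleteSpace E]
    {H : ℝ → ℝ → E} {a b C : ℝ} (hab : a ≤ b) (hleft : ∀ ρ, Continuous (H · ρ))
    (hright : ∀ r, Continuous (H r))
    (hC : ∀ r ρ, ‖H r ρ‖ ≤ C) :
    ∫ ρ in a..b, ∫ r in a..ρ, H r ρ = ∫ r in a..b, ∫ ρ in r..b, H r ρ := by
  let K : ℝ → ℝ → E := fun ρ r => {x | x ≤ ρ}.indicator (H · ρ) r
  have hK : Function.uncurry K = {p : ℝ × ℝ | p.2 ≤ p.1}.indicator fun p => H p.2 p.1 := by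
    ext ⟨ρ, r⟩; simp [K, indicator_apply]
  have hmeas : StronglyMeasurable (Function.uncurry H) :=
    stronglyMeasurable_uncurry_of_continuous_of_stronglyMeasurable hleft
      fun r => (hright r).stronglyMeasurable
  have hint : IntegrableOn (Function.uncurry K) (uIoc a b ×ˢ uIoc a b) := by
    refine Measure.integrableOn_of_bounded
      ((Metric.isBounded_Ioc _ _).prod (Metric.isBounded_Ioc _ _)).measure_lt_top.ne ?_
      (Eventually.of_forall fun p =>
        (norm_indicator_le_norm_self (H · p.1) p.2).trans (hC _ _))
    rw [hK]
    exact ((hmeas.comp_measurable measurable_swap).indicator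
      (measurableSet_le measurable_snd measurable_fst)).aestronglyMeasurable
  calc ∫ ρ in a..b, ∫ r in a..ρ, H r ρ = ∫ ρ in a..b, ∫ r in a..b, K ρ r := by
        refine integral_congr fun ρ hρ => ?_
        rw [uIcc_of_le hab] at hρ
        exact (intervalIntegral.integral_indicator hρ).symm
    _ = ∫ r in a..b, ∫ ρ in a..b, K ρ r := intervalIntegral_intervalIntegral_swap hint
    _ = ∫ r in a..b, ∫ ρ in r..b, H r ρ := by
        refine integral_congr fun r hr => ?_
        rw [uIcc_of_le hab] at hr
        have hKr : (K · r) =ᵐ[volume] (Ioi r).indicator (H r) := by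
          refine EventuallyEq.trans ?_ (indicator_ae_eq_of_ae_eq_set Ioi_ae_eq_Ici.symm)
          exact Eventually.of_forall fun ρ => by simp [K, indicator_apply]
        rw [integral_congr_ae (hKr.mono fun _ h _ => h), integral_indicator_Ioi hr]

theorem integral_integral_swap_triangle [CompleteSpace E] {F : ℝ → ℝ → E} {a b C : ℝ}
    (hab : a ≤ b) (hleft : ∀ ρ ∈ Icc a b, ContinuousOn (F · ρ) (Icc a ρ))
    (hright : ∀ r ∈ Icc a b, ContinuousOn (F r) (Icc r b))
    (hdiag : ContinuousOn (fun s => F s s) (Icc a b))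
    (hC : ∀ r ∈ Icc a b, ∀ ρ ∈ Icc r b, ‖F r ρ‖ ≤ C) :
    ∫ ρ in a..b, ∫ r in a..ρ, F r ρ = ∫ r in a..b, ∫ ρ in r..b, F r ρ := by
  obtain ⟨H, hHleft, hHright, hHC, hHF⟩ :=
    exists_separatelyContinuous_extension_of_triangle hab hleft hright hdiag hC
  calc ∫ ρ in a..b, ∫ r in a..ρ, F r ρ = ∫ ρ in a..b, ∫ r in a..ρ, H r ρ := by
        refine integral_congr fun ρ hρ => integral_congr fun r hr => ?_
        rw [uIcc_of_le hab] at hρ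
        rw [uIcc_of_le hρ.1] at hr
        exact (hHF r ⟨hr.1, hr.2.trans hρ.2⟩ ρ ⟨hr.2, hρ.2⟩).symm
    _ = ∫ r in a..b, ∫ ρ in r..b, H r ρ :=
        integral_integral_swap_triangle_of_separatelyContinuous hab hHleft hHright hHC
    _ = ∫ r in a..b, ∫ ρ in r..b, F r ρ := by
        refine integral_congr fun r hr => integral_congr fun ρ hρ => ?_
        rw [uIcc_of_le hab] at hr
        rw [uIcc_of_le hr.2] at hρ
        exact hHF r hr ρ hρ

end IntervalIntegral

section Perturbation

variable {X : Type*} [NormedAddCommGroup X] [NormedSpace ℝ X] [CompleteSpace X]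
  {Ub Ωb : ℝ → ℝ → X →L[ℝ] X} {Q : ℝ → X →L[ℝ] X} {a b MUb MΩ : ℝ}

theorem integral_comp_integral_perturbed
    (hUbbdd : ∀ t s, a ≤ t → t ≤ s → s ≤ b → ‖Ub t s‖ ≤ MUb)
    (hUbsc : ∀ y, ∀ t ∈ Icc a b, ContinuousOn (fun s => Ub t s y) (Icc t b))
    (hQsc : ∀ y, ContinuousOn (fun r => Q r y) (Icc a b))
    (hΩid : ∀ s ∈ Icc a b, Ωb s s = ContinuousLinearMap.id ℝ X)
    (hΩbdd : ∀ t s, a ≤ t → t ≤ s → s ≤ b → ‖Ωb t s‖ ≤ MΩ)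
    (hΩsc₁ : ∀ y, ∀ s ∈ Icc a b, ContinuousOn (fun t => Ωb t s y) (Icc a s))
    (hΩsc₂ : ∀ y, ∀ t ∈ Icc a b, ContinuousOn (fun s => Ωb t s y) (Icc t b))
    (hΩeq : ∀ y t s, a ≤ t → t ≤ s → s ≤ b →
      Ωb t s y = Ub t s y - ∫ r in t..s, Ub t r (Q r (Ωb r s y)))
    {t : ℝ} (ht : t ∈ Icc a b) {w : ℝ → X} (hw : ContinuousOn w (Icc t b)) :
    ∫ r in t..b, Ub t r (Q r (∫ ρ in r..b, Ωb r ρ (w ρ))) =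
      ∫ ρ in t..b, (Ub t ρ (w ρ) - Ωb t ρ (w ρ)) := by
  obtain ⟨MQ, hMQ⟩ := isCompact_Icc.exists_bound_of_continuousOn_apply hQsc
  obtain ⟨Cw, hCw⟩ := isCompact_Icc.exists_bound_of_continuousOn hw
  have htb : Icc t b ⊆ Icc a b := Icc_subset_Icc_left ht.1
  have hUbQ : ∀ {s} {f : ℝ → X}, s ⊆ Icc t b → ContinuousOn f s →
      ContinuousOn (fun r => Ub t r (Q r (f r))) s := fun hs hf =>
    (hf.clm_apply_of_isCompact isCompact_Icc hQsc (hs.trans htb)).evolution_apply hUbsc hUbbdd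
      ht hs
  have hΩw : ∀ r ∈ Icc t b, ContinuousOn (fun ρ => Ωb r ρ (w ρ)) (Icc r b) := fun r hr =>
    (hw.mono (Icc_subset_Icc_left hr.1)).evolution_apply hΩsc₂ hΩbdd (htb hr) subset_rfl
  calc ∫ r in t..b, Ub t r (Q r (∫ ρ in r..b, Ωb r ρ (w ρ)))
      = ∫ r in t..b, ∫ ρ in r..b, Ub t r (Q r (Ωb r ρ (w ρ))) := by
        refine integral_congr fun r hr => ?_
        rw [uIcc_of_le ht.2] at hr
        exact (((Ub t r).comp (Q r)).intervalIntegral_comp_comm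
          ((hΩw r hr).intervalIntegrable_of_Icc hr.2)).symm
    _ = ∫ ρ in t..b, ∫ r in t..ρ, Ub t r (Q r (Ωb r ρ (w ρ))) := by
        refine (integral_integral_swap_triangle (C := MUb * (MQ * (MΩ * Cw))) ht.2
          (fun ρ hρ => hUbQ (Icc_subset_Icc_right hρ.2)
            ((hΩsc₁ (w ρ) ρ (htb hρ)).mono (Icc_subset_Icc_left ht.1)))
          (fun r hr => ((Ub t r).comp (Q r)).continuous.comp_continuousOn (hΩw r hr)) ?_ ?_).symm
        · refine (hUbQ subset_rfl hw).congr fun s hs => ?_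
          rw [hΩid s (htb hs)]
          rfl
        · intro r hr ρ hρ
          exact (Ub t r).le_of_opNorm_le_of_le (hUbbdd t r ht.1 hr.1 (hρ.1.trans hρ.2))
            ((Q r).le_of_opNorm_le_of_le (hMQ r (htb hr))
            ((Ωb r ρ).le_of_opNorm_le_of_le (hΩbdd r ρ (htb hr).1 hρ.1 hρ.2)
            (hCw ρ ⟨hr.1.trans hρ.1, hρ.2⟩)))
    _ = ∫ ρ in t..b, (Ub t ρ (w ρ) - Ωb t ρ (w ρ)) := by
        refine integral_congr fun ρ hρ => ?_
        rw [uIcc_of_le ht.2] at hρ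
        rw [hΩeq (w ρ) t ρ ht.1 hρ.1 hρ.2, sub_sub_cancel]

theorem eq_add_integral_of_perturbed
    (hUbbdd : ∀ t s, a ≤ t → t ≤ s → s ≤ b → ‖Ub t s‖ ≤ MUb)
    (hUbsc : ∀ y, ∀ t ∈ Icc a b, ContinuousOn (fun s => Ub t s y) (Icc t b))
    (hQsc : ∀ y, ContinuousOn (fun r => Q r y) (Icc a b))
    (hΩid : ∀ s ∈ Icc a b, Ωb s s = ContinuousLinearMap.id ℝ X)
    (hΩbdd : ∀ t s, a ≤ t → t ≤ s → s ≤ b → ‖Ωb t s‖ ≤ MΩ)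
    (hΩsc₁ : ∀ y, ∀ s ∈ Icc a b, ContinuousOn (fun t => Ωb t s y) (Icc a s))
    (hΩsc₂ : ∀ y, ∀ t ∈ Icc a b, ContinuousOn (fun s => Ωb t s y) (Icc t b))
    (hΩeq : ∀ y t s, a ≤ t → t ≤ s → s ≤ b →
      Ωb t s y = Ub t s y - ∫ r in t..s, Ub t r (Q r (Ωb r s y)))
    {t : ℝ} (ht : t ∈ Icc a b) {g : X} {w : ℝ → X} (hw : ContinuousOn w (Icc t b))
    {p : ℝ → X} (hp : ∀ r ∈ Icc t b, p r = Ωb r b g + ∫ ρ in r..b, Ωb r ρ (w ρ)) :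
    p t = Ub t b g + ∫ r in t..b, Ub t r (w r - Q r (p r)) := by
  obtain ⟨Cw, hCw⟩ := isCompact_Icc.exists_bound_of_continuousOn hw
  have htb : Icc t b ⊆ Icc a b := Icc_subset_Icc_left ht.1
  have hS : ContinuousOn (fun r => ∫ ρ in r..b, Ωb r ρ (w ρ)) (Icc t b) :=
    continuousOn_intervalIntegral_of_triangle (C := MΩ * Cw)
      (fun r hr => (hw.mono (Icc_subset_Icc_left hr.1)).evolution_apply hΩsc₂ hΩbdd (htb hr)
        subset_rfl)
      (fun ρ hρ => (hΩsc₁ (w ρ) ρ (htb hρ)).mono (Icc_subset_Icc_left ht.1))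
      fun r hr ρ hρ => (Ωb r ρ).le_of_opNorm_le_of_le (hΩbdd r ρ (htb hr).1 hρ.1 hρ.2)
        (hCw ρ ⟨hr.1.trans hρ.1, hρ.2⟩)
  have hΩg : ContinuousOn (fun r => Ωb r b g) (Icc t b) :=
    (hΩsc₁ g b ⟨ht.1.trans ht.2, le_rfl⟩).mono (Icc_subset_Icc_left ht.1)
  have hUb : ∀ {f : ℝ → X}, ContinuousOn f (Icc t b) →
      IntervalIntegrable (fun r => Ub t r (f r)) volume t b := fun hf =>
    (hf.evolution_apply hUbsc hUbbdd ht subset_rfl).intervalIntegrable_of_Icc ht.2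
  have hQ : ∀ {f : ℝ → X}, ContinuousOn f (Icc t b) → ContinuousOn (fun r => Q r (f r)) (Icc t b) :=
    fun hf => hf.clm_apply_of_isCompact isCompact_Icc hQsc htb
  have hΩw : IntervalIntegrable (fun r => Ωb t r (w r)) volume t b :=
    (hw.evolution_apply hΩsc₂ hΩbdd ht subset_rfl).intervalIntegrable_of_Icc ht.2
  calc p t = Ωb t b g + ∫ r in t..b, Ωb t r (w r) := hp t ⟨le_rfl, ht.2⟩
    _ = Ub t b g + ((∫ r in t..b, Ub t r (w r)) - (Ub t b g - Ωb t b g) -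
          ∫ r in t..b, (Ub t r (w r) - Ωb t r (w r))) := by
        rw [integral_sub (hUb hw) hΩw]; abel
    _ = Ub t b g + ((∫ r in t..b, Ub t r (w r)) - (∫ r in t..b, Ub t r (Q r (Ωb r b g))) -
          ∫ r in t..b, Ub t r (Q r (∫ ρ in r..b, Ωb r ρ (w ρ)))) := by
        rw [integral_comp_integral_perturbed hUbbdd hUbsc hQsc hΩid hΩbdd hΩsc₁ hΩsc₂
          hΩeq ht hw, hΩeq g t b ht.1 ht.2 le_rfl, sub_sub_cancel]
    _ = Ub t b g + ∫ r in t..b, Ub t r (w r - Q r (p r)) := by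
        rw [← integral_sub (hUb hw) (hUb (hQ hΩg)),
          ← integral_sub ((hUb hw).sub (hUb (hQ hΩg))) (hUb (hQ hS))]
        congr 1
        refine integral_congr fun r hr => ?_
        rw [uIcc_of_le ht.2] at hr
        simp only [hp r hr, map_add, map_sub]
        abel

theorem eqOn_of_eq_add_integral
    (hUbbdd : ∀ t s, a ≤ t → t ≤ s → s ≤ b → ‖Ub t s‖ ≤ MUb)
    (hUbsc : ∀ y, ∀ t ∈ Icc a b, ContinuousOn (fun s => Ub t s y) (Icc t b))
    (hQsc : ∀ y, ContinuousOn (fun r => Q r y) (Icc a b))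
    {t : ℝ} (ht : t ∈ Icc a b) {h w z₁ z₂ : ℝ → X} (hw : ContinuousOn w (Icc t b))
    (hz₁ : ContinuousOn z₁ (Icc t b)) (hz₂ : ContinuousOn z₂ (Icc t b))
    (h₁ : ∀ s ∈ Icc t b, z₁ s = h s + ∫ r in s..b, Ub s r (w r - Q r (z₁ r)))
    (h₂ : ∀ s ∈ Icc t b, z₂ s = h s + ∫ r in s..b, Ub s r (w r - Q r (z₂ r))) :
    EqOn z₁ z₂ (Icc t b) := by
  obtain ⟨MQ, hMQ⟩ := isCompact_Icc.exists_bound_of_continuousOn_apply hQsc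
  have htb : Icc t b ⊆ Icc a b := Icc_subset_Icc_left ht.1
  have hint : ∀ {z : ℝ → X}, ContinuousOn z (Icc t b) → ∀ s ∈ Icc t b,
      IntervalIntegrable (fun r => Ub s r (w r - Q r (z r))) volume s b := fun hz s hs =>
    (((hw.sub (hz.clm_apply_of_isCompact isCompact_Icc hQsc htb)).mono
      (Icc_subset_Icc_left hs.1)).evolution_apply hUbsc hUbbdd (htb hs)
      subset_rfl).intervalIntegrable_of_Icc hs.2
  have hzero := eqOn_zero_of_eq_integral (K := fun s r => -(Ub s r).comp (Q r))
    (M := MUb * MQ) (hz₁.sub hz₂) (fun s hs r hr => ?_) fun s hs => ?_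
  · exact fun s hs => sub_eq_zero.mp (hzero hs)
  · rw [norm_neg]
    exact (ContinuousLinearMap.opNorm_comp_le _ _).trans (mul_le_mul
      (hUbbdd s r (htb hs).1 hr.1 hr.2) (hMQ r (htb ⟨hs.1.trans hr.1, hr.2⟩)) (norm_nonneg _)
      ((norm_nonneg _).trans (hUbbdd s s (htb hs).1 le_rfl hs.2)))
  · rw [Pi.sub_apply, h₁ s hs, h₂ s hs, add_sub_add_left_eq_sub,
      ← integral_sub (hint hz₁ s hs) (hint hz₂ s hs)]
    refine integral_congr fun r _ => ?_
    simp only [neg_apply, ContinuousLinearMap.comp_apply, Pi.sub_apply, map_sub]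
    abel

end Perturbation

theorem exists_continuousOn_eq_add_integral {E F : Type*} [NormedAddCommGroup E]
    [NormedSpace ℝ E] [CompleteSpace E] [NormedAddCommGroup F] [NormedSpace ℝ F] [CompleteSpace F]
    {U : ℝ → ℝ → E →L[ℝ] E} {Φ : ℝ → ℝ → F →L[ℝ] F} {W : ℝ → E →L[ℝ] F} {a b MU MΦ : ℝ}
    (hUbdd : ∀ s t, a ≤ s → s ≤ t → t ≤ b → ‖U t s‖ ≤ MU)
    (hUsc₁ : ∀ x, ∀ s ∈ Icc a b, ContinuousOn (fun t => U t s x) (Icc s b))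
    (hUsc₂ : ∀ x, ∀ t ∈ Icc a b, ContinuousOn (fun s => U t s x) (Icc a t))
    (hΦbdd : ∀ t s, a ≤ t → t ≤ s → s ≤ b → ‖Φ t s‖ ≤ MΦ)
    (hΦsc₁ : ∀ y, ∀ s ∈ Icc a b, ContinuousOn (fun t => Φ t s y) (Icc a s))
    (hΦsc₂ : ∀ y, ∀ t ∈ Icc a b, ContinuousOn (fun s => Φ t s y) (Icc t b))
    (hWsc : ∀ x, ContinuousOn (fun r => W r x) (Icc a b)) (G : E →L[ℝ] F) :
    ∃ P : ℝ → E →L[ℝ] F, (∀ x, ContinuousOn (fun t => P t x) (Icc a b)) ∧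
      ∀ t ∈ Icc a b, ∀ x, P t x = Φ t b (G (U b t x)) + ∫ r in t..b, Φ t r (W r (U r t x)) := by
  obtain ⟨MW, hMW⟩ := isCompact_Icc.exists_bound_of_continuousOn_apply hWsc
  have hK : ∀ t ∈ Icc a b, ∀ x, ContinuousOn (fun r => Φ t r (W r (U r t x))) (Icc t b) :=
    fun t ht x => ((hUsc₁ x t ht).clm_apply_of_isCompact isCompact_Icc hWsc
      (Icc_subset_Icc_left ht.1)).evolution_apply hΦsc₂ hΦbdd ht subset_rfl
  have hbound : ∀ t ∈ Icc a b, ∀ r ∈ Icc t b,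
      ‖Φ t r‖ ≤ MΦ ∧ ‖W r‖ ≤ MW ∧ ‖U r t‖ ≤ MU := fun t ht r hr =>
    ⟨hΦbdd t r ht.1 hr.1 hr.2, hMW r ⟨ht.1.trans hr.1, hr.2⟩, hUbdd t r ht.1 hr.1 hr.2⟩
  have hJ : ∀ t ∈ Icc a b, ∃ J : E →L[ℝ] F, ∀ x, J x = ∫ r in t..b, Φ t r (W r (U r t x)) :=
    fun t ht => exists_clm_apply_eq_intervalIntegral
      (A := fun r => (Φ t r).comp ((W r).comp (U r t)))
      (fun x => (hK t ht x).intervalIntegrable_of_Icc ht.2)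
      fun r hr => by
        rw [uIoc_of_le ht.2] at hr
        obtain ⟨hΦ, hW, hU⟩ := hbound t ht r ⟨hr.1.le, hr.2⟩
        exact (ContinuousLinearMap.opNorm_comp_le _ _).trans (mul_le_mul hΦ
          ((ContinuousLinearMap.opNorm_comp_le _ _).trans (mul_le_mul hW hU (norm_nonneg _)
          ((norm_nonneg _).trans hW))) (norm_nonneg _) ((norm_nonneg _).trans hΦ))
  choose! J hJ using hJ
  have hP : ∀ t ∈ Icc a b, ∀ x, ((Φ t b).comp (G.comp (U b t)) + J t) x =
      Φ t b (G (U b t x)) + ∫ r in t..b, Φ t r (W r (U r t x)) := fun t ht x => by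
    simp [hJ t ht x]
  refine ⟨fun t => (Φ t b).comp (G.comp (U b t)) + J t, fun x => ?_, hP⟩
  refine ContinuousOn.congr (ContinuousOn.add (fun t ht => ?_) ?_) fun t ht => hP t ht x
  · have hb : b ∈ Icc a b := ⟨ht.1.trans ht.2, le_rfl⟩
    exact ((G.continuous.comp_continuousOn (hUsc₂ x b hb)).clm_apply_of_norm_le (hΦsc₁ · b hb)
      (fun t ht => hΦbdd t b ht.1 ht.2 le_rfl)) t ht
  · refine continuousOn_intervalIntegral_of_triangle (C := MΦ * (MW * (MU * ‖x‖)))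
      (fun t ht => hK t ht x) (fun r hr => ?_) fun t ht r hr => ?_
    · exact ((W r).continuous.comp_continuousOn (hUsc₂ x r hr)).clm_apply_of_norm_le
        (hΦsc₁ · r hr) fun t ht => hΦbdd t r ht.1 ht.2 hr.2
    · obtain ⟨hΦ, hW, hU⟩ := hbound t ht r hr
      exact (Φ t r).le_of_opNorm_le_of_le hΦ ((W r).le_of_opNorm_le_of_le hW
        ((U r t).le_of_opNorm_le hU x))

theorem add_integral_evolution_comp {E F : Type*} [NormedAddCommGroup E] [NormedSpace ℝ E]
    [NormedAddCommGroup F] [NormedSpace ℝ F] {U : ℝ → ℝ → E →L[ℝ] E} {a b t s : ℝ}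
    (hUcomp : ∀ s r t, a ≤ s → s ≤ r → r ≤ t → t ≤ b → U t s = (U t r).comp (U r s))
    (ht : a ≤ t) (hs : s ∈ Icc t b) (x : E) (c : E → F) (f : ℝ → E → F) :
    c (U b s (U s t x)) + ∫ r in s..b, f r (U r s (U s t x)) =
      c (U b t x) + ∫ r in s..b, f r (U r t x) := by
  have hUU : ∀ r ∈ Icc s b, U r s (U s t x) = U r t x := fun r hr => by
    rw [hUcomp t s r ht hs.1 hr.1 hr.2]; rfl
  rw [hUU b ⟨hs.2, le_rfl⟩]
  refine congrArg _ (integral_congr fun r hr => ?_)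
  rw [uIcc_of_le hs.2] at hr
  simp only [hUU r hr]

theorem linear_integral_equation_unique_solution_right_general
    {X₁ X₂ : Type*}
    [NormedAddCommGroup X₁] [NormedSpace ℝ X₁] [CompleteSpace X₁]
    [NormedAddCommGroup X₂] [NormedSpace ℝ X₂] [CompleteSpace X₂]
    (T : ℝ)
    -- forward evolution family in L(X₁): strongly continuous, uniformly bounded
    (Ul : ℝ → ℝ → X₁ →L[ℝ] X₁)
    (hUlid : ∀ s ∈ Set.Icc 0 T, Ul s s = ContinuousLinearMap.id ℝ X₁)
    (hUlcomp : ∀ s r t : ℝ, 0 ≤ s → s ≤ r → r ≤ t → t ≤ T →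
      Ul t s = (Ul t r).comp (Ul r s))
    (MUl : ℝ) (hUlbdd : ∀ s t : ℝ, 0 ≤ s → s ≤ t → t ≤ T → ‖Ul t s‖ ≤ MUl)
    (hUlsc₁ : ∀ x : X₁, ∀ s ∈ Set.Icc 0 T, ContinuousOn (fun t => Ul t s x) (Set.Icc s T))
    (hUlsc₂ : ∀ x : X₁, ∀ t ∈ Set.Icc 0 T, ContinuousOn (fun s => Ul t s x) (Set.Icc 0 t))
    -- backward evolution family in L(X₂): strongly continuous, uniformly bounded
    (Ub : ℝ → ℝ → X₂ →L[ℝ] X₂)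
    (MUb : ℝ) (hUbbdd : ∀ t s : ℝ, 0 ≤ t → t ≤ s → s ≤ T → ‖Ub t s‖ ≤ MUb)
    (hUbsc₂ : ∀ y : X₂, ∀ t ∈ Set.Icc 0 T, ContinuousOn (fun s => Ub t s y) (Set.Icc t T))
    -- strongly continuous coefficients
    (Q12 : ℝ → X₁ →L[ℝ] X₂)
    (hQ12sc : ∀ x : X₁, ContinuousOn (fun t => Q12 t x) (Set.Icc 0 T))
    (Q2 : ℝ → X₂ →L[ℝ] X₂)
    (hQ2sc : ∀ y : X₂, ContinuousOn (fun t => Q2 t y) (Set.Icc 0 T))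
    -- the perturbed backward evolution family Ω⃗
    (Ωb : ℝ → ℝ → X₂ →L[ℝ] X₂)
    (hΩbid : ∀ s ∈ Set.Icc 0 T, Ωb s s = ContinuousLinearMap.id ℝ X₂)
    (MΩb : ℝ) (hΩbbdd : ∀ t s : ℝ, 0 ≤ t → t ≤ s → s ≤ T → ‖Ωb t s‖ ≤ MΩb)
    (hΩbsc₁ : ∀ y : X₂, ∀ s ∈ Set.Icc 0 T, ContinuousOn (fun t => Ωb t s y) (Set.Icc 0 s))
    (hΩbsc₂ : ∀ y : X₂, ∀ t ∈ Set.Icc 0 T, ContinuousOn (fun s => Ωb t s y) (Set.Icc t T))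
    (hΩbeq : ∀ y : X₂, ∀ t s : ℝ, 0 ≤ t → t ≤ s → s ≤ T →
      Ωb t s y = Ub t s y - ∫ r in t..s, Ub t r (Q2 r (Ωb r s y)))
    (G : X₁ →L[ℝ] X₂) :
    ∃ P : ℝ → X₁ →L[ℝ] X₂,
      (∀ x : X₁, ContinuousOn (fun t => P t x) (Set.Icc 0 T)) ∧
      -- P is given by the representation formula
      (∀ t ∈ Set.Icc 0 T, ∀ x : X₁,
        P t x = Ωb t T (G (Ul T t x)) + ∫ r in t..T, Ωb t r (Q12 r (Ul r t x))) ∧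
      -- P solves the linear integral equation
      (∀ t ∈ Set.Icc 0 T, ∀ x : X₁,
        P t x = Ub t T (G (Ul T t x)) +
          ∫ r in t..T, Ub t r (Q12 r (Ul r t x) - Q2 r (P r (Ul r t x)))) ∧
      -- and it is the unique strongly continuous solution
      (∀ Q : ℝ → X₁ →L[ℝ] X₂,
        (∀ x : X₁, ContinuousOn (fun t => Q t x) (Set.Icc 0 T)) →
        (∀ t ∈ Set.Icc 0 T, ∀ x : X₁,
          Q t x = Ub t T (G (Ul T t x)) +
            ∫ r in t..T, Ub t r (Q12 r (Ul r t x) - Q2 r (Q r (Ul r t x)))) →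
        ∀ t ∈ Set.Icc 0 T, Q t = P t) := by
  obtain ⟨P, hPcont, hPx⟩ := exists_continuousOn_eq_add_integral hUlbdd hUlsc₁ hUlsc₂ hΩbbdd
    hΩbsc₁ hΩbsc₂ hQ12sc G
  have hUlt : ∀ t ∈ Icc (0 : ℝ) T, ∀ x, Ul t t x = x := fun t ht x => by rw [hUlid t ht]; rfl
  have horbit : ∀ Z : ℝ → X₁ →L[ℝ] X₂, (∀ x, ContinuousOn (fun r => Z r x) (Icc 0 T)) →
      ∀ t ∈ Icc (0 : ℝ) T, ∀ x, ContinuousOn (fun r => Z r (Ul r t x)) (Icc t T) :=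
    fun Z hZ t ht x => (hUlsc₁ x t ht).clm_apply_of_isCompact isCompact_Icc hZ
      (Icc_subset_Icc_left ht.1)
  have hsolution : ∀ Z : ℝ → X₁ →L[ℝ] X₂, (∀ t ∈ Icc 0 T, ∀ x, Z t x = Ub t T (G (Ul T t x)) +
        ∫ r in t..T, Ub t r (Q12 r (Ul r t x) - Q2 r (Z r (Ul r t x)))) →
      ∀ t ∈ Icc (0 : ℝ) T, ∀ x, ∀ s ∈ Icc t T, Z s (Ul s t x) = Ub s T (G (Ul T t x)) +
        ∫ r in s..T, Ub s r (Q12 r (Ul r t x) - Q2 r (Z r (Ul r t x))) :=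
    fun Z hZ t ht x s hs => (hZ s ⟨ht.1.trans hs.1, hs.2⟩ _).trans
      (add_integral_evolution_comp hUlcomp ht.1 hs x (fun y => Ub s T (G y))
        fun r y => Ub s r (Q12 r y - Q2 r (Z r y)))
  have hPeq : ∀ t ∈ Icc 0 T, ∀ x, P t x = Ub t T (G (Ul T t x)) +
      ∫ r in t..T, Ub t r (Q12 r (Ul r t x) - Q2 r (P r (Ul r t x))) := fun t ht x => by
    simpa only [hUlt t ht] using eq_add_integral_of_perturbed hUbbdd hUbsc₂ hQ2sc hΩbid hΩbbdd
      hΩbsc₁ hΩbsc₂ hΩbeq ht (horbit Q12 hQ12sc t ht x) fun s hs =>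
        (hPx s ⟨ht.1.trans hs.1, hs.2⟩ _).trans
          (add_integral_evolution_comp hUlcomp ht.1 hs x (fun y => Ωb s T (G y))
            fun r y => Ωb s r (Q12 r y))
  refine ⟨P, hPcont, hPx, hPeq, fun Z hZcont hZeq t ht => ContinuousLinearMap.ext fun x => ?_⟩
  simpa only [hUlt t ht] using eqOn_of_eq_add_integral hUbbdd hUbsc₂ hQ2sc ht
    (horbit Q12 hQ12sc t ht x) (horbit Z hZcont t ht x) (horbit P hPcont t ht x)
    (hsolution Z hZeq t ht x) (hsolution P hPeq t ht x) ⟨le_rfl, ht.2⟩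

/-- representation of the unique strongly continuous solution of the
linear integral equation `P(t) = U⃗_{t,T} G U⃖_{T,t} + ∫_t^T U⃗_{t,r}[Q₁₂(r) − Q₂(r)P(r)]U⃖_{r,t} dr`
via the perturbed backward family `Ω⃗`. -/
theorem linear_integral_equation_unique_solution_right
    {X₁ X₂ : Type*}
    [NormedAddCommGroup X₁] [NormedSpace ℝ X₁] [CompleteSpace X₁]
    [NormedAddCommGroup X₂] [NormedSpace ℝ X₂] [CompleteSpace X₂]
    (T : ℝ) (hT : 0 ≤ T)
    -- forward evolution family in L(X₁): strongly continuous, uniformly bounded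
    (Ul : ℝ → ℝ → X₁ →L[ℝ] X₁)
    (hUlid : ∀ s ∈ Set.Icc 0 T, Ul s s = ContinuousLinearMap.id ℝ X₁)
    (hUlcomp : ∀ s r t : ℝ, 0 ≤ s → s ≤ r → r ≤ t → t ≤ T →
      Ul t s = (Ul t r).comp (Ul r s))
    (MUl : ℝ) (hUlbdd : ∀ s t : ℝ, 0 ≤ s → s ≤ t → t ≤ T → ‖Ul t s‖ ≤ MUl)
    (hUlsc₁ : ∀ x : X₁, ∀ s ∈ Set.Icc 0 T, ContinuousOn (fun t => Ul t s x) (Set.Icc s T))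
    (hUlsc₂ : ∀ x : X₁, ∀ t ∈ Set.Icc 0 T, ContinuousOn (fun s => Ul t s x) (Set.Icc 0 t))
    -- backward evolution family in L(X₂): strongly continuous, uniformly bounded
    (Ub : ℝ → ℝ → X₂ →L[ℝ] X₂)
    (hUbid : ∀ s ∈ Set.Icc 0 T, Ub s s = ContinuousLinearMap.id ℝ X₂)
    (hUbcomp : ∀ t r s : ℝ, 0 ≤ t → t ≤ r → r ≤ s → s ≤ T →
      Ub t s = (Ub t r).comp (Ub r s))
    (MUb : ℝ) (hUbbdd : ∀ t s : ℝ, 0 ≤ t → t ≤ s → s ≤ T → ‖Ub t s‖ ≤ MUb)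
    (hUbsc₁ : ∀ y : X₂, ∀ s ∈ Set.Icc 0 T, ContinuousOn (fun t => Ub t s y) (Set.Icc 0 s))
    (hUbsc₂ : ∀ y : X₂, ∀ t ∈ Set.Icc 0 T, ContinuousOn (fun s => Ub t s y) (Set.Icc t T))
    -- strongly continuous coefficients
    (Q12 : ℝ → X₁ →L[ℝ] X₂)
    (hQ12sc : ∀ x : X₁, ContinuousOn (fun t => Q12 t x) (Set.Icc 0 T))
    (Q2 : ℝ → X₂ →L[ℝ] X₂)
    (hQ2sc : ∀ y : X₂, ContinuousOn (fun t => Q2 t y) (Set.Icc 0 T))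
    -- the perturbed backward evolution family Ω⃗
    (Ωb : ℝ → ℝ → X₂ →L[ℝ] X₂)
    (hΩbid : ∀ s ∈ Set.Icc 0 T, Ωb s s = ContinuousLinearMap.id ℝ X₂)
    (hΩbcomp : ∀ t r s : ℝ, 0 ≤ t → t ≤ r → r ≤ s → s ≤ T →
      Ωb t s = (Ωb t r).comp (Ωb r s))
    (MΩb : ℝ) (hΩbbdd : ∀ t s : ℝ, 0 ≤ t → t ≤ s → s ≤ T → ‖Ωb t s‖ ≤ MΩb)
    (hΩbsc₁ : ∀ y : X₂, ∀ s ∈ Set.Icc 0 T, ContinuousOn (fun t => Ωb t s y) (Set.Icc 0 s))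
    (hΩbsc₂ : ∀ y : X₂, ∀ t ∈ Set.Icc 0 T, ContinuousOn (fun s => Ωb t s y) (Set.Icc t T))
    (hΩbeq : ∀ y : X₂, ∀ t s : ℝ, 0 ≤ t → t ≤ s → s ≤ T →
      Ωb t s y = Ub t s y - ∫ r in t..s, Ub t r (Q2 r (Ωb r s y)))
    (G : X₁ →L[ℝ] X₂) :
    ∃ P : ℝ → X₁ →L[ℝ] X₂,
      (∀ x : X₁, ContinuousOn (fun t => P t x) (Set.Icc 0 T)) ∧
      -- P is given by the representation formula
      (∀ t ∈ Set.Icc 0 T, ∀ x : X₁,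
        P t x = Ωb t T (G (Ul T t x)) + ∫ r in t..T, Ωb t r (Q12 r (Ul r t x))) ∧
      -- P solves the linear integral equation
      (∀ t ∈ Set.Icc 0 T, ∀ x : X₁,
        P t x = Ub t T (G (Ul T t x)) +
          ∫ r in t..T, Ub t r (Q12 r (Ul r t x) - Q2 r (P r (Ul r t x)))) ∧
      -- and it is the unique strongly continuous solution
      (∀ Q : ℝ → X₁ →L[ℝ] X₂,
        (∀ x : X₁, ContinuousOn (fun t => Q t x) (Set.Icc 0 T)) →
        (∀ t ∈ Set.Icc 0 T, ∀ x : X₁,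
          Q t x = Ub t T (G (Ul T t x)) +
            ∫ r in t..T, Ub t r (Q12 r (Ul r t x) - Q2 r (Q r (Ul r t x)))) →
        ∀ t ∈ Set.Icc 0 T, Q t = P t) :=
  linear_integral_equation_unique_solution_right_general T Ul hUlid hUlcomp MUl hUlbdd hUlsc₁ hUlsc₂
    Ub MUb hUbbdd hUbsc₂ Q12 hQ12sc Q2 hQ2sc Ωb hΩbid MΩb hΩbbdd hΩbsc₁ hΩbsc₂ hΩbeq G
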